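/- (Bachoc distance bound) Let Λ be a set of 2×2 complex matrices containing the zero matrix, let δ ≥ 0 be such that every nonzero X ∈ Λ satisfies |det(X)|^2 ≥ δ, and let d be a natural number. Let X_1, …, X_L ∈ Λ, not all zero, and suppose that either (i) for every i there exists Y_i ∈ Λ with X_i = (1+i)·Y_i (entrywise scalar multiple by the complex number 1+i), or (ii) there exist natural numbers w_1, …, w_L with Σ w_j ≥ d such that for each j: w_j = 0, or (w_j = 1 and |det(X_j)|^2 ≥ δ), or (w_j = 2 and |det(X_j)|^2 ≥ 2δ). Then |det(X_1X_1^* + … + X_LX_L^*)| ≥ min(4δ, d^2·δ/2). -/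

import Mathlib

/-! For positive semidefinite Hermitian 2×2 matrices `A = [[a, c], [c̄, b]]`, `√det` is
superadditive (the 2×2 case of Minkowski's determinant inequality): expanding
`det (A₁ + A₂)`, the mixed term `a₁b₂ + a₂b₁ - 2 Re (c₁ c̄₂)` dominates `2 √(det A₁ det A₂)` by
Cauchy–Schwarz followed by AM–GM. As `det (X Xᴴ) = |det X|²`, this gives
`|det (∑ Xⱼ Xⱼᴴ)| ≥ (∑ |det Xⱼ|)²`. In case (i) a nonzero `Xᵢ = (1 + i) Yᵢ` contributes
`|det Xᵢ| = 2 |det Yᵢ| ≥ 2√δ`; in case (ii) each `|det Xⱼ| ≥ wⱼ √(δ/2)`, so the sum is at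
least `d √(δ/2)`. -/

open ComplexConjugate
open scoped ComplexOrder

lemma two_mul_add_mul_le {a₁ b₁ a₂ b₂ s₁ s₂ q₁ q₂ : ℝ} (ha₁ : 0 ≤ a₁) (hb₁ : 0 ≤ b₁)
    (ha₂ : 0 ≤ a₂) (hb₂ : 0 ≤ b₂) (h₁ : s₁ ^ 2 + q₁ ^ 2 = a₁ * b₁)
    (h₂ : s₂ ^ 2 + q₂ ^ 2 = a₂ * b₂) :
    2 * (s₁ * s₂ + q₁ * q₂) ≤ a₁ * b₂ + a₂ * b₁ := by
  have cauchy_schwarz : (s₁ * s₂ + q₁ * q₂) ^ 2 ≤ (a₁ * b₂) * (a₂ * b₁) := by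
    nlinarith [sq_nonneg (s₁ * q₂ - s₂ * q₁)]
  have am_gm : 4 * ((a₁ * b₂) * (a₂ * b₁)) ≤ (a₁ * b₂ + a₂ * b₁) ^ 2 := by
    nlinarith [sq_nonneg (a₁ * b₂ - a₂ * b₁)]
  exact (abs_le_of_sq_le_sq' (by nlinarith) (by positivity)).2

lemma sqrt_sub_normSq_add_sqrt_sub_normSq_le {a₁ b₁ a₂ b₂ : ℝ} {c₁ c₂ : ℂ} (ha₁ : 0 ≤ a₁)
    (hb₁ : 0 ≤ b₁) (ha₂ : 0 ≤ a₂) (hb₂ : 0 ≤ b₂) (hc₁ : Complex.normSq c₁ ≤ a₁ * b₁)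
    (hc₂ : Complex.normSq c₂ ≤ a₂ * b₂) :
    √(a₁ * b₁ - Complex.normSq c₁) + √(a₂ * b₂ - Complex.normSq c₂) ≤
      √((a₁ + a₂) * (b₁ + b₂) - Complex.normSq (c₁ + c₂)) := by
  set s₁ := √(a₁ * b₁ - Complex.normSq c₁)
  set s₂ := √(a₂ * b₂ - Complex.normSq c₂)
  have hs₁ : s₁ ^ 2 + ‖c₁‖ ^ 2 = a₁ * b₁ := by
    rw [Real.sq_sqrt (by linarith), Complex.sq_norm]; ring
  have hs₂ : s₂ ^ 2 + ‖c₂‖ ^ 2 = a₂ * b₂ := by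
    rw [Real.sq_sqrt (by linarith), Complex.sq_norm]; ring
  have hmixed := two_mul_add_mul_le ha₁ hb₁ ha₂ hb₂ hs₁ hs₂
  have htriangle : Complex.normSq (c₁ + c₂) ≤ (‖c₁‖ + ‖c₂‖) ^ 2 := by
    rw [← Complex.sq_norm]; gcongr; exact norm_add_le c₁ c₂
  apply Real.le_sqrt_of_sq_le
  nlinarith

lemma natCast_mul_sqrt_half_le {δ x : ℝ} {w : ℕ} (hδ : 0 ≤ δ) (hx : 0 ≤ x)
    (hw : w = 0 ∨ (w = 1 ∧ δ ≤ x ^ 2) ∨ (w = 2 ∧ 2 * δ ≤ x ^ 2)) :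
    w * √(δ / 2) ≤ x := by
  rw [← pow_le_pow_iff_left₀ (by positivity) hx two_ne_zero, mul_pow, Real.sq_sqrt (by positivity)]
  rcases hw with rfl | ⟨rfl, h⟩ | ⟨rfl, h⟩ <;> push_cast <;> linarith [sq_nonneg x]

namespace Matrix

lemma det_fin_two_hermitian (a b : ℝ) (c : ℂ) :
    (!![(a : ℂ), c; conj c, b]).det = ((a * b - Complex.normSq c : ℝ) : ℂ) := by
  rw [det_fin_two_of, Complex.mul_conj]
  push_cast
  ring

lemma PosSemidef.exists_eq_fin_two {A : Matrix (Fin 2) (Fin 2) ℂ} (hA : A.PosSemidef) :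
    ∃ (a b : ℝ) (c : ℂ), 0 ≤ a ∧ 0 ≤ b ∧ Complex.normSq c ≤ a * b ∧
      A = !![(a : ℂ), c; conj c, b] := by
  have hdiag (i : Fin 2) : A i i = (A i i).re :=
    Complex.eq_re_of_ofReal_le (r := 0) (by exact_mod_cast hA.diag_nonneg)
  have hA10 : A 1 0 = conj (A 0 1) := (hA.isHermitian.apply 1 0).symm
  have hA_eq : A = !![((A 0 0).re : ℂ), A 0 1; conj (A 0 1), ((A 1 1).re : ℂ)] := by
    ext i j; fin_cases i <;> fin_cases j <;> simp [← hdiag, hA10]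
  have hdet := hA.det_nonneg
  rw [hA_eq, det_fin_two_hermitian, Complex.zero_le_real] at hdet
  exact ⟨_, _, _, Complex.zero_le_real.mp (hdiag 0 ▸ hA.diag_nonneg),
    Complex.zero_le_real.mp (hdiag 1 ▸ hA.diag_nonneg), by linarith, hA_eq⟩

lemma PosSemidef.sqrt_det_add_sqrt_det_le_fin_two {A B : Matrix (Fin 2) (Fin 2) ℂ}
    (hA : A.PosSemidef) (hB : B.PosSemidef) :
    √A.det.re + √B.det.re ≤ √(A + B).det.re := by
  obtain ⟨a₁, b₁, c₁, ha₁, hb₁, hc₁, rfl⟩ := hA.exists_eq_fin_two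
  obtain ⟨a₂, b₂, c₂, ha₂, hb₂, hc₂, rfl⟩ := hB.exists_eq_fin_two
  have hsum : !![(a₁ : ℂ), c₁; conj c₁, b₁] + !![(a₂ : ℂ), c₂; conj c₂, b₂] =
      !![((a₁ + a₂ : ℝ) : ℂ), c₁ + c₂; conj (c₁ + c₂), ((b₁ + b₂ : ℝ) : ℂ)] := by
    ext i j; fin_cases i <;> fin_cases j <;> simp
  simp only [hsum, det_fin_two_hermitian, Complex.ofReal_re]
  exact sqrt_sub_normSq_add_sqrt_sub_normSq_le ha₁ hb₁ ha₂ hb₂ hc₁ hc₂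

lemma sum_sqrt_det_le_sqrt_det_sum_fin_two {ι : Type*} {A : ι → Matrix (Fin 2) (Fin 2) ℂ}
    (s : Finset ι) (hA : ∀ i ∈ s, (A i).PosSemidef) :
    ∑ i ∈ s, √(A i).det.re ≤ √(∑ i ∈ s, A i).det.re := by
  classical
  induction s using Finset.induction_on with
  | empty => simp
  | insert j s hj ih =>
    rw [Finset.sum_insert hj, Finset.sum_insert hj]
    have hAs := fun i hi => hA i (Finset.mem_insert_of_mem hi)
    calc √(A j).det.re + ∑ i ∈ s, √(A i).det.re
        ≤ √(A j).det.re + √(∑ i ∈ s, A i).det.re := by gcongr; exact ih hAs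
      _ ≤ √(A j + ∑ i ∈ s, A i).det.re :=
        (hA j (Finset.mem_insert_self j s)).sqrt_det_add_sqrt_det_le_fin_two
          (posSemidef_sum s hAs)

lemma sqrt_re_det_mul_conjTranspose_self {n : Type*} [Fintype n] [DecidableEq n]
    (X : Matrix n n ℂ) : √(X * Xᴴ).det.re = ‖X.det‖ := by
  rw [det_mul, det_conjTranspose, Complex.star_def, Complex.mul_conj, Complex.ofReal_re,
    ← Complex.sq_norm, Real.sqrt_sq (norm_nonneg _)]

lemma sq_sum_norm_det_le_norm_det_sum_mul_conjTranspose {ι : Type*} (s : Finset ι)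
    (X : ι → Matrix (Fin 2) (Fin 2) ℂ) :
    (∑ i ∈ s, ‖(X i).det‖) ^ 2 ≤ ‖(∑ i ∈ s, X i * (X i)ᴴ).det‖ := by
  have hpsd : ∀ i ∈ s, (X i * (X i)ᴴ).PosSemidef := fun i _ => posSemidef_self_mul_conjTranspose _
  have key := sum_sqrt_det_le_sqrt_det_sum_fin_two s hpsd
  simp only [sqrt_re_det_mul_conjTranspose_self] at key
  have hnonneg := (posSemidef_sum s hpsd).det_nonneg
  rw [← Complex.re_eq_norm.mpr hnonneg]
  exact (Real.le_sqrt (by positivity) (Complex.nonneg_iff.mp hnonneg).1).mp key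

lemma norm_det_one_add_I_smul (Y : Matrix (Fin 2) (Fin 2) ℂ) :
    ‖((1 + Complex.I) • Y).det‖ = 2 * ‖Y.det‖ := by
  rw [det_smul, Fintype.card_fin, norm_mul, norm_pow, ← Complex.normSq_eq_norm_sq]
  simp [Complex.normSq_apply]; norm_num

end Matrix

open Finset Matrix

theorem stmt_2 (L : ℕ)
    (Λ : Set (Matrix (Fin 2) (Fin 2) ℂ))
    (δ : ℝ) (hδ : 0 ≤ δ)
    (hdet : ∀ X ∈ Λ, X ≠ 0 → δ ≤ ‖X.det‖ ^ 2)
    (d : ℕ)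
    (X : Fin L → Matrix (Fin 2) (Fin 2) ℂ)
    (hne : ∃ i, X i ≠ 0)
    (hcase : (∀ i, ∃ Y ∈ Λ, X i = (1 + Complex.I) • Y) ∨
      ∃ w : Fin L → ℕ, d ≤ ∑ j, w j ∧
        ∀ j, w j = 0 ∨ (w j = 1 ∧ δ ≤ ‖(X j).det‖ ^ 2) ∨
          (w j = 2 ∧ 2 * δ ≤ ‖(X j).det‖ ^ 2)) :
    min (4 * δ) ((d : ℝ) ^ 2 * δ / 2) ≤ ‖(∑ j, X j * (X j)ᴴ).det‖ := by
  refine le_trans ?_ (sq_sum_norm_det_le_norm_det_sum_mul_conjTranspose univ X)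
  rcases hcase with hdiv | ⟨w, hwd, hw⟩
  · obtain ⟨i, hi⟩ := hne
    obtain ⟨Y, hY, hXY⟩ := hdiv i
    have hYne : Y ≠ 0 := by rintro rfl; simp [hXY] at hi
    calc min (4 * δ) ((d : ℝ) ^ 2 * δ / 2) ≤ 4 * ‖Y.det‖ ^ 2 :=
          (min_le_left _ _).trans (by linarith [hdet Y hY hYne])
      _ = ‖(X i).det‖ ^ 2 := by rw [hXY, norm_det_one_add_I_smul]; ring
      _ ≤ (∑ j, ‖(X j).det‖) ^ 2 := by
          gcongr; exact single_le_sum (fun j _ => norm_nonneg (X j).det) (mem_univ i)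
  · have hsum : d * √(δ / 2) ≤ ∑ j, ‖(X j).det‖ :=
      calc d * √(δ / 2) ≤ (∑ j, w j : ℕ) * √(δ / 2) := by gcongr
        _ = ∑ j, w j * √(δ / 2) := by push_cast; rw [sum_mul]
        _ ≤ ∑ j, ‖(X j).det‖ :=
          sum_le_sum fun j _ => natCast_mul_sqrt_half_le hδ (norm_nonneg _) (hw j)
    calc min (4 * δ) ((d : ℝ) ^ 2 * δ / 2) ≤ (d * √(δ / 2)) ^ 2 := by
          rw [mul_pow, Real.sq_sqrt (by positivity)]; exact (min_le_right _ _).trans_eq (by ring)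
      _ ≤ (∑ j, ‖(X j).det‖) ^ 2 := by gcongr
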